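/- In the braid group B₄ = ⟨σ₁, σ₂, σ₃ | σ₁σ₂σ₁ = σ₂σ₁σ₂, σ₂σ₃σ₂ = σ₃σ₂σ₃, σ₁σ₃ = σ₃σ₁⟩, the elements a = σ₂², b = (σ₂σ₃σ₂)², c = σ₃², d = σ₁² satisfy the defining relations of A(P₄): ab = ba, bc = cb, cd = dc. -/
import Mathlib


/-- Relations of the braid group B₄ = ⟨σ₁,σ₂,σ₃ | σ₁σ₂σ₁ = σ₂σ₁σ₂,
σ₂σ₃σ₂ = σ₃σ₂σ₃, σ₁σ₃ = σ₃σ₁⟩, generators indexed by `Fin 3` (i ↦ σ_{i+1}). -/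
def braid4Rels : Set (FreeGroup (Fin 3)) :=
  { FreeGroup.of 0 * FreeGroup.of 1 * FreeGroup.of 0 *
      (FreeGroup.of 1 * FreeGroup.of 0 * FreeGroup.of 1)⁻¹,
    FreeGroup.of 1 * FreeGroup.of 2 * FreeGroup.of 1 *
      (FreeGroup.of 2 * FreeGroup.of 1 * FreeGroup.of 2)⁻¹,
    FreeGroup.of 0 * FreeGroup.of 2 * (FreeGroup.of 2 * FreeGroup.of 0)⁻¹ }

/-- In B₄, the elements a = σ₂², b = (σ₂σ₃σ₂)², c = σ₃², d = σ₁² satisfy the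
defining relations of A(P₄): ab = ba, bc = cb, cd = dc. -/
theorem braid4_squares_satisfy_AP4_relations :
    let σ₁ : PresentedGroup braid4Rels := PresentedGroup.of 0
    let σ₂ : PresentedGroup braid4Rels := PresentedGroup.of 1
    let σ₃ : PresentedGroup braid4Rels := PresentedGroup.of 2
    let a := σ₂ ^ 2
    let b := (σ₂ * σ₃ * σ₂) ^ 2
    let c := σ₃ ^ 2
    let d := σ₁ ^ 2
    a * b = b * a ∧ b * c = c * b ∧ c * d = d * c := by
  intro σ₁ σ₂ σ₃ a b c d
  have key : ∀ r ∈ braid4Rels, PresentedGroup.mk braid4Rels r = 1 := by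
    intro r hr
    exact (QuotientGroup.eq_one_iff r).mpr (Subgroup.subset_normalClosure hr)
  have h2 : σ₂ * σ₃ * σ₂ = σ₃ * σ₂ * σ₃ := by
    have := key _ (by right; left; rfl)
    simp only [map_mul, map_inv] at this
    rw [mul_inv_eq_one] at this
    exact this
  have h3 : σ₁ * σ₃ = σ₃ * σ₁ := by
    have := key _ (by right; right; rfl)
    simp only [map_mul, map_inv] at this
    rw [mul_inv_eq_one] at this
    exact this
  have hab : a = σ₂ ^ 2 := rfl
  have hbb : b = (σ₂ * σ₃ * σ₂) ^ 2 := rfl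
  have hcb : c = σ₃ ^ 2 := rfl
  have hdb : d = σ₁ ^ 2 := rfl
  clear_value a b c d
  subst hab hbb hcb hdb
  clear_value σ₁ σ₂ σ₃
  have s1 : SemiconjBy (σ₂ * σ₃ * σ₂) σ₂ σ₃ := by
    show σ₂ * σ₃ * σ₂ * σ₂ = σ₃ * (σ₂ * σ₃ * σ₂)
    conv_lhs => rw [h2]
    simp only [mul_assoc]
  have s2 : SemiconjBy (σ₂ * σ₃ * σ₂) σ₃ σ₂ := by
    show σ₂ * σ₃ * σ₂ * σ₃ = σ₂ * (σ₂ * σ₃ * σ₂)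
    conv_rhs => rw [h2]
    simp only [mul_assoc]
  have cA : Commute ((σ₂ * σ₃ * σ₂) * (σ₂ * σ₃ * σ₂)) σ₂ := s2.mul_left s1
  have cC : Commute ((σ₂ * σ₃ * σ₂) * (σ₂ * σ₃ * σ₂)) σ₃ := s1.mul_left s2
  have cB : Commute ((σ₂ * σ₃ * σ₂) ^ 2) σ₂ := by rwa [pow_two]
  have cB' : Commute ((σ₂ * σ₃ * σ₂) ^ 2) σ₃ := by rwa [pow_two]
  have cD : Commute σ₃ σ₁ := h3.symm
  exact ⟨((cB.pow_right 2).symm).eq, (cB'.pow_right 2).eq, (cD.pow_pow 2 2).eq⟩
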